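/- Let E ⊆ [0,1]^ℕ be a Borel set such that [0,1]^ℕ ∖ E is countable-dimensional and every countable-dimensional subset of E satisfies dim ≤ 0. If the set F(E) ∖ F₀'(E), where F₀'(E) = {A ∈ F(E) : dim A ≤ 0}, is Souslin in the Effros Borel space (F(E), 𝓑_{F(E)}), then the collection 𝓒 of all countable-dimensional compact subsets of the Hilbert cube [0,1]^ℕ is a coanalytic subset of the hyperspace F([0,1]^ℕ) equipped with the Vietoris topology. -/

import Mathlib

open Set Topology TopologicalSpace MeasureTheory

/-- The Effros Borel structure on the collection of closed subsets of `X`. -/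
def effrosSigma (X : Type*) [TopologicalSpace X] :
    MeasurableSpace {A : Set X // IsClosed A} :=
  MeasurableSpace.generateFrom
    {𝓤 : Set {A : Set X // IsClosed A} |
      ∃ U : Set X, IsOpen U ∧ 𝓤 = {A : {A : Set X // IsClosed A} | ((A : Set X) ∩ U).Nonempty}}

/-- `𝓐` is the result of the Souslin operation applied to `m`-measurable sets. -/
def IsSouslinIn {α : Type*} (m : MeasurableSpace α) (𝓐 : Set α) : Prop :=
  ∃ f : List ℕ → Set α, (∀ s, MeasurableSet[m] (f s)) ∧
    𝓐 = ⋃ σ : ℕ → ℕ, ⋂ n : ℕ, f (List.ofFn fun i : Fin n => σ i)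

/-- dim X ≤ 0 : `X` has a base consisting of clopen sets (or is empty). -/
def ZeroDimensional (X : Type*) [TopologicalSpace X] : Prop :=
  ∃ B : Set (Set X), (∀ s ∈ B, IsClopen s) ∧ IsTopologicalBasis B

/-- Every point of `S` is isolated in the subspace `S`. -/
def RelativelyDiscrete {E : Type*} [TopologicalSpace E] (S : Set E) : Prop :=
  ∀ x ∈ S, ∃ U : Set E, IsOpen U ∧ U ∩ S = {x}

/-- countable union of zero-dimensional subspaces -/
def CountableDimensional (X : Type*) [TopologicalSpace X] : Prop :=
  ∃ C : ℕ → Set X, (⋃ n, C n) = univ ∧ ∀ n, ZeroDimensional (C n)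

/-- F₀(X): nonempty zero-dimensional closed sets -/
def zeroDimClosedSets (X : Type*) [TopologicalSpace X] :
    Set {A : Set X // IsClosed A} :=
  {A | (A : Set X).Nonempty ∧ ZeroDimensional (A : Set X)}

/-- The Vietoris topology on the collection of closed subsets of `X`. -/
def vietoris (X : Type*) [TopologicalSpace X] :
    TopologicalSpace {A : Set X // IsClosed A} :=
  TopologicalSpace.generateFrom
    ({𝓤 | ∃ U : Set X, IsOpen U ∧ 𝓤 = {A : {A : Set X // IsClosed A} | (A : Set X) ⊆ U}} ∪
     {𝓤 | ∃ U : Set X, IsOpen U ∧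
        𝓤 = {A : {A : Set X // IsClosed A} | ((A : Set X) ∩ U).Nonempty}})

/-- The Wijsman topology on nonempty closed subsets of a metric space. -/
noncomputable def wijsman (E : Type*) [MetricSpace E] :
    TopologicalSpace {A : Set E // IsClosed A ∧ A.Nonempty} :=
  ⨅ z : E, TopologicalSpace.induced (fun A => Metric.infDist z (A : Set E)) inferInstance

/-- The Hilbert cube `[0,1]^ℕ`. -/
abbrev HilbertCube : Type := ℕ → unitInterval

/-! For a compactum `K`, the part `K \ E` is countable-dimensional because `Eᶜ` is, so `K` is
countable-dimensional iff its trace `K ∩ E` is zero-dimensional. The Effros structure on `F(E)`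
is pulled back from the Borel structure of the Vietoris hyperspace by `A ↦ closure A`, so the
Souslin family of non-zero-dimensional closed subsets of `E` becomes the preimage of a Souslin,
hence analytic, family `𝓑` of compacta. As zero-dimensionality passes to subspaces, `K` is not
countable-dimensional iff it contains some `B ∈ 𝓑` with `B = closure (B ∩ E)`; the latter
condition is analytic (it quantifies over a countable base), so the family of such `K` is the
projection of an analytic set. -/

theorem polishSpace_of_compactSpace (X : Type*) [TopologicalSpace X] [CompactSpace X] [T2Space X]
    [SecondCountableTopology X] : PolishSpace X := by
  let := metrizableSpaceMetric X
  infer_instance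

section Dimension

variable {X Y Z : Type*} [TopologicalSpace X] [TopologicalSpace Y] [TopologicalSpace Z]

theorem Topology.IsInducing.exists_isInducing_of_range_subset {i : X → Z} {j : Y → Z}
    (hi : IsInducing i) (hj : IsInducing j) (h : range i ⊆ range j) :
    ∃ f : X → Y, IsInducing f := by
  choose f hf using fun x => h (mem_range_self x)
  exact ⟨f, hj.of_comp_iff.1 (by rwa [show j ∘ f = i from funext hf])⟩

theorem ZeroDimensional.of_isInducing {f : X → Y} (h : ZeroDimensional Y) (hf : IsInducing f) :
    ZeroDimensional X := by
  obtain ⟨B, hclopen, hB⟩ := h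
  exact ⟨(f ⁻¹' ·) '' B, forall_mem_image.2 fun t ht => (hclopen t ht).preimage hf.continuous,
    hB.isInducing hf⟩

theorem ZeroDimensional.of_range_subset {i : X → Z} {j : Y → Z} (h : ZeroDimensional Y)
    (hi : IsInducing i) (hj : IsInducing j) (hij : range i ⊆ range j) : ZeroDimensional X :=
  let ⟨_, hf⟩ := hi.exists_isInducing_of_range_subset hj hij
  h.of_isInducing hf

theorem ZeroDimensional.mono {s t : Set X} (hst : s ⊆ t) (ht : ZeroDimensional t) :
    ZeroDimensional s :=
  ht.of_range_subset .subtypeVal .subtypeVal (by simpa only [Subtype.range_coe])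

theorem ZeroDimensional.image_val {S : Set X} {C : Set S} (h : ZeroDimensional C) :
    ZeroDimensional (((↑) : S → X) '' C) :=
  h.of_range_subset .subtypeVal (IsInducing.subtypeVal.comp .subtypeVal)
    (by rw [Subtype.range_coe, range_comp, Subtype.range_coe])

theorem ZeroDimensional.countableDimensional (h : ZeroDimensional X) : CountableDimensional X :=
  ⟨fun _ => univ, iUnion_const _, fun _ => h.of_isInducing .subtypeVal⟩

theorem CountableDimensional.of_isInducing {f : X → Y} (h : CountableDimensional Y)
    (hf : IsInducing f) : CountableDimensional X := by
  obtain ⟨C, hcov, hC⟩ := h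
  refine ⟨fun n => f ⁻¹' C n, by rw [← preimage_iUnion, hcov, preimage_univ], fun n => ?_⟩
  refine (hC n).of_range_subset (hf.comp .subtypeVal) .subtypeVal ?_
  rw [range_comp, Subtype.range_coe, Subtype.range_coe]
  exact image_preimage_subset f (C n)

theorem CountableDimensional.of_range_subset {i : X → Z} {j : Y → Z}
    (h : CountableDimensional Y) (hi : IsInducing i) (hj : IsInducing j)
    (hij : range i ⊆ range j) : CountableDimensional X :=
  let ⟨_, hf⟩ := hi.exists_isInducing_of_range_subset hj hij
  h.of_isInducing hf

theorem CountableDimensional.of_union_eq_univ {S T : Set X} (hS : CountableDimensional S)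
    (hT : CountableDimensional T) (h : S ∪ T = univ) : CountableDimensional X := by
  obtain ⟨C, hC, hCzero⟩ := hS
  obtain ⟨D, hD, hDzero⟩ := hT
  let G : ℕ ⊕ ℕ → Set X := Sum.elim (fun n => (↑) '' C n) (fun n => (↑) '' D n)
  have hG : ∀ i, ZeroDimensional (G i) := by
    rintro (m | m)
    · exact (hCzero m).image_val
    · exact (hDzero m).image_val
  refine ⟨fun n => G (Equiv.natSumNatEquivNat.symm n), ?_, fun n => hG _⟩
  rw [Equiv.natSumNatEquivNat.symm.surjective.iUnion_comp G, iUnion_sum]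
  simp only [G, Sum.elim_inl, Sum.elim_inr, ← image_iUnion, hC, hD, image_univ,
    Subtype.range_coe, h]

theorem countableDimensional_iff_zeroDimensional_preimage_val {E K : Set X}
    (hcompl : CountableDimensional (Eᶜ : Set X))
    (hzero : ∀ A : Set X, A ⊆ E → CountableDimensional A → ZeroDimensional A) :
    CountableDimensional K ↔ ZeroDimensional (((↑) : E → X) ⁻¹' K) := by
  have hval : ∀ {S : Set X} {T : Set S},
      range (((↑) : S → X) ∘ ((↑) : T → S)) = (↑) '' T :=
    fun {_ _} => by rw [range_comp, Subtype.range_coe]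
  constructor
  · intro hK
    have hEK : ZeroDimensional (E ∩ K : Set X) := hzero _ inter_subset_left
      (hK.of_range_subset .subtypeVal .subtypeVal (by simp))
    refine hEK.of_range_subset (IsInducing.subtypeVal.comp .subtypeVal) .subtypeVal ?_
    rw [hval, Subtype.image_preimage_coe, Subtype.range_coe]
  · intro hE
    refine CountableDimensional.of_union_eq_univ (S := ((↑) : K → X) ⁻¹' E)
      (T := (↑) ⁻¹' Eᶜ) ?_ ?_ (by rw [← preimage_union, union_compl_self, preimage_univ])
    · refine (hE.of_range_subset (IsInducing.subtypeVal.comp .subtypeVal)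
        (IsInducing.subtypeVal.comp .subtypeVal) ?_).countableDimensional
      rw [hval, hval, Subtype.image_preimage_coe, Subtype.image_preimage_coe, inter_comm]
    · refine hcompl.of_range_subset (IsInducing.subtypeVal.comp .subtypeVal) .subtypeVal ?_
      rw [hval, Subtype.image_preimage_coe, Subtype.range_coe]
      exact inter_subset_right

end Dimension

namespace MeasureTheory

variable {α β : Type*} [TopologicalSpace α] [TopologicalSpace β]

theorem AnalyticSet.inter [T2Space α] {s t : Set α} (hs : AnalyticSet s) (ht : AnalyticSet t) :
    AnalyticSet (s ∩ t) := by
  rw [inter_eq_iInter]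
  exact AnalyticSet.iInter (Bool.forall_bool.2 ⟨ht, hs⟩)

theorem AnalyticSet.union {s t : Set α} (hs : AnalyticSet s) (ht : AnalyticSet t) :
    AnalyticSet (s ∪ t) := by
  rw [union_eq_iUnion]
  exact AnalyticSet.iUnion (Bool.forall_bool.2 ⟨ht, hs⟩)

theorem AnalyticSet.iInter_of_polishSpace [PolishSpace α] {ι : Type*} [Countable ι]
    {s : ι → Set α} (hs : ∀ i, AnalyticSet (s i)) : AnalyticSet (⋂ i, s i) := by
  cases isEmpty_or_nonempty ι
  · rw [iInter_of_empty]
    exact isClosed_univ.analyticSet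
  · exact AnalyticSet.iInter hs

theorem AnalyticSet.setOf_exists_mem [PolishSpace α] [PolishSpace β] {R : Set (α × β)}
    (hR : IsClosed R) {S : Set β} (hS : AnalyticSet S) :
    AnalyticSet {a | ∃ b ∈ S, (a, b) ∈ R} := by
  have : {a | ∃ b ∈ S, (a, b) ∈ R} = Prod.fst '' (R ∩ Prod.snd ⁻¹' S) := by
    ext a
    simp [and_comm]
  rw [this]
  exact (hR.analyticSet.inter (hS.preimage continuous_snd)).image_of_continuous continuous_fst

end MeasureTheory

theorem IsSouslinIn.exists_preimage_eq {α β : Type*} {m : MeasurableSpace α}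
    {m' : MeasurableSpace β} {g : α → β} {𝓐 : Set α} (h : IsSouslinIn m 𝓐)
    (hm : m ≤ m'.comap g) : ∃ 𝓑, IsSouslinIn m' 𝓑 ∧ g ⁻¹' 𝓑 = 𝓐 := by
  obtain ⟨f, hf, rfl⟩ := h
  choose F hF hFf using fun s => hm _ (hf s)
  exact ⟨_, ⟨F, hF, rfl⟩, by simp only [preimage_iUnion, preimage_iInter, hFf]⟩

theorem IsSouslinIn.analyticSet {α : Type*} [TopologicalSpace α] [PolishSpace α] {𝓐 : Set α}
    (h : IsSouslinIn (borel α) 𝓐) : AnalyticSet 𝓐 := by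
  let := borel α
  have : BorelSpace α := ⟨rfl⟩
  obtain ⟨f, hf, rfl⟩ := h
  have hlevel : ∀ n, MeasurableSet
      {p : α × (ℕ → ℕ) | p.1 ∈ f (List.ofFn fun i : Fin n => p.2 i)} := by
    intro n
    have hmem : Measurable fun q : α × (Fin n → ℕ) => q.1 ∈ f (List.ofFn q.2) :=
      measurable_from_prod_countable_left fun t => measurableSet_setOfPred.1 (hf (List.ofFn t))
    have hrestrict : Measurable fun p : α × (ℕ → ℕ) => (p.1, fun i : Fin n => p.2 i) := by
      fun_prop
    exact measurableSet_setOfPred.2 (hmem.comp hrestrict)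
  have : ⋃ σ : ℕ → ℕ, ⋂ n, f (List.ofFn fun i : Fin n => σ i) =
      Prod.fst '' ⋂ n,
        {p : α × (ℕ → ℕ) | p.1 ∈ f (List.ofFn fun i : Fin n => p.2 i)} := by
    ext
    simp
  rw [this]
  exact (MeasurableSet.iInter hlevel).analyticSet.image_of_continuous continuous_fst

namespace TopologicalSpace.Compacts

variable {X : Type*} [TopologicalSpace X]

theorem isClosed_setOf_le [T2Space X] :
    IsClosed {p : Compacts X × Compacts X | p.2 ≤ p.1} := by
  have hsup : Continuous fun p : Compacts X × Compacts X => p.1 ⊔ p.2 := by fun_prop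
  simpa only [sup_eq_left] using isClosed_eq hsup continuous_fst

theorem isClosed_setOf_mem [T2Space X] : IsClosed {p : Compacts X × X | p.2 ∈ p.1} := by
  have hpair : Continuous fun p : Compacts X × X => (p.1, ({p.2} : Compacts X)) := by fun_prop
  simpa only [preimage_ofPred_eq, ← SetLike.coe_subset_coe, coe_singleton, singleton_subset_iff,
    SetLike.mem_coe] using isClosed_setOf_le.preimage hpair

theorem analyticSet_setOf_inter_nonempty [CompactSpace X] [T2Space X]
    [SecondCountableTopology X] {M : Set X} (hM : MeasurableSet[borel X] M) :
    AnalyticSet {K : Compacts X | ((K : Set X) ∩ M).Nonempty} := by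
  have := polishSpace_of_compactSpace X
  have := polishSpace_of_compactSpace (Compacts X)
  let := borel X
  have : BorelSpace X := ⟨rfl⟩
  have hM' : AnalyticSet M := hM.analyticSet
  simpa [Set.Nonempty, and_comm] using AnalyticSet.setOf_exists_mem isClosed_setOf_mem hM'

def toClosedSubtype [T2Space X] (K : Compacts X) : {A : Set X // IsClosed A} :=
  ⟨K, K.isCompact.isClosed⟩

theorem continuous_toClosedSubtype [T2Space X] :
    @Continuous (Compacts X) _ _ (vietoris X) toClosedSubtype := by
  rw [vietoris, continuous_generateFrom_iff]
  rintro _ (⟨U, hU, rfl⟩ | ⟨U, hU, rfl⟩)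
  · exact isOpen_subsets_of_isOpen hU
  · exact isOpen_inter_nonempty_of_isOpen hU

theorem compl_setOf_isCompact_and_countableDimensional [CompactSpace X] [T2Space X] :
    {K : {A : Set X // IsClosed A} | IsCompact (K : Set X) ∧ CountableDimensional K}ᶜ =
      toClosedSubtype '' {K : Compacts X | ¬ CountableDimensional K} := by
  ext K
  refine ⟨fun hK => ⟨⟨K, K.2.isCompact⟩, fun h => hK ⟨K.2.isCompact, h⟩, rfl⟩, ?_⟩
  rintro ⟨L, hL, rfl⟩ h
  exact hL h.2

end TopologicalSpace.Compacts

section AmbientClosure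

variable {X : Type*} [TopologicalSpace X] [CompactSpace X] (E : Set X)

def ambientClosure (A : {A : Set E // IsClosed A}) : Compacts X :=
  ⟨closure ((↑) '' (A : Set E)), isClosed_closure.isCompact⟩

def traceOn [T2Space X] (K : Compacts X) : {A : Set E // IsClosed A} :=
  ⟨(↑) ⁻¹' (K : Set X), K.isCompact.isClosed.preimage continuous_subtype_val⟩

theorem effrosSigma_le_comap_ambientClosure :
    effrosSigma E ≤ (borel (Compacts X)).comap (ambientClosure E) := by
  refine MeasurableSpace.generateFrom_le ?_
  rintro _ ⟨U, hU, rfl⟩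
  obtain ⟨V, hV, rfl⟩ := isOpen_induced_iff.1 hU
  refine ⟨{K : Compacts X | ((K : Set X) ∩ V).Nonempty},
    MeasurableSpace.measurableSet_generateFrom (Compacts.isOpen_inter_nonempty_of_isOpen hV), ?_⟩
  ext A
  exact (closure_inter_open_nonempty_iff hV).trans image_inter_nonempty_iff

variable [T2Space X]

theorem coe_ambientClosure_traceOn (K : Compacts X) :
    (ambientClosure E (traceOn E K) : Set X) = closure (E ∩ K) :=
  congrArg closure (Subtype.image_preimage_coe E K)

theorem ambientClosure_traceOn_le (K : Compacts X) : ambientClosure E (traceOn E K) ≤ K := by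
  rw [← SetLike.coe_subset_coe, coe_ambientClosure_traceOn]
  exact closure_minimal inter_subset_right K.isCompact.isClosed

theorem ambientClosure_traceOn_idem (K : Compacts X) :
    ambientClosure E (traceOn E (ambientClosure E (traceOn E K))) =
      ambientClosure E (traceOn E K) := by
  refine le_antisymm (ambientClosure_traceOn_le E _) ?_
  rw [← SetLike.coe_subset_coe, coe_ambientClosure_traceOn, coe_ambientClosure_traceOn,
    coe_ambientClosure_traceOn]
  exact closure_mono (subset_inter inter_subset_left subset_closure)

theorem ambientClosure_traceOn_eq_iff (K : Compacts X) :
    ambientClosure E (traceOn E K) = K ↔ (K : Set X) ⊆ closure (E ∩ K) := by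
  rw [← coe_ambientClosure_traceOn, SetLike.coe_subset_coe]
  exact ⟨ge_of_eq, (ambientClosure_traceOn_le E K).antisymm⟩

theorem analyticSet_setOf_ambientClosure_traceOn_eq [SecondCountableTopology X]
    (hE : MeasurableSet[borel X] E) :
    AnalyticSet {K : Compacts X | ambientClosure E (traceOn E K) = K} := by
  have := polishSpace_of_compactSpace (Compacts X)
  let := borel X
  have : BorelSpace X := ⟨rfl⟩
  have hbasis := isBasis_countableBasis X
  have : {K : Compacts X | ambientClosure E (traceOn E K) = K} =
      ⋂ U : countableBasis X, ({K : Compacts X | ((K : Set X) ∩ U).Nonempty}ᶜ ∪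
        {K | ((K : Set X) ∩ (U ∩ E)).Nonempty}) := by
    ext K
    simp only [mem_ofPred_eq, ambientClosure_traceOn_eq_iff, mem_iInter, mem_union, mem_compl_iff,
      ← imp_iff_not_or, subset_def, hbasis.mem_closure_iff, Subtype.forall]
    constructor
    · rintro h U hU ⟨x, hxK, hxU⟩
      obtain ⟨y, hyU, hyE, hyK⟩ := h x hxK U hU hxU
      exact ⟨y, hyK, hyU, hyE⟩
    · intro h x hxK U hU hxU
      obtain ⟨y, hyK, hyU, hyE⟩ := h U hU ⟨x, hxK, hxU⟩
      exact ⟨y, hyU, hyE, hyK⟩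
  rw [this]
  refine AnalyticSet.iInter_of_polishSpace fun U => AnalyticSet.union ?_ ?_
  · exact (Compacts.isOpen_inter_nonempty_of_isOpen
      (hbasis.isOpen U.2)).isClosed_compl.analyticSet
  · exact Compacts.analyticSet_setOf_inter_nonempty
      ((hbasis.isOpen U.2).measurableSet.inter hE)

end AmbientClosure

theorem setOf_not_countableDimensional_eq_exists_le {X : Type*} [TopologicalSpace X]
    [CompactSpace X] [T2Space X] {E : Set X} (hcompl : CountableDimensional (Eᶜ : Set X))
    (hzero : ∀ A : Set X, A ⊆ E → CountableDimensional A → ZeroDimensional A)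
    {𝓑 : Set (Compacts X)}
    (h𝓑 : ambientClosure E ⁻¹' 𝓑 =
      {A : {A : Set E // IsClosed A} | ZeroDimensional A}ᶜ) :
    {K : Compacts X | ¬ CountableDimensional K} =
      {K | ∃ B ∈ 𝓑 ∩ {B | ambientClosure E (traceOn E B) = B}, B ≤ K} := by
  have hmem : ∀ A, ambientClosure E A ∈ 𝓑 ↔ ¬ ZeroDimensional (A : Set E) := fun A => by
    rw [← mem_preimage, h𝓑]
    rfl
  have htrace : ∀ K : Compacts X,
      CountableDimensional K ↔ ZeroDimensional (traceOn E K : Set E) :=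
    fun K => countableDimensional_iff_zeroDimensional_preimage_val hcompl hzero
  ext K
  simp only [mem_ofPred_eq, htrace]
  constructor
  · intro hK
    exact ⟨_, ⟨(hmem _).2 hK, ambientClosure_traceOn_idem E K⟩,
      ambientClosure_traceOn_le E K⟩
  · rintro ⟨B, ⟨hB, hBfix⟩, hBK⟩ hK
    rw [← hBfix, hmem] at hB
    exact hB (hK.mono (preimage_mono (SetLike.coe_subset_coe.2 hBK)))

theorem countable_dimensional_compacta_coanalytic_of_complement_souslin
    (E : Set HilbertCube)
    (hBorel : MeasurableSet[borel HilbertCube] E)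
    (hcompl : CountableDimensional (Eᶜ : Set HilbertCube))
    (hzero : ∀ A : Set HilbertCube, A ⊆ E → CountableDimensional A → ZeroDimensional A)
    (hsouslin : IsSouslinIn (effrosSigma E)
      ({A : {A : Set E // IsClosed A} | ZeroDimensional (A : Set E)}ᶜ)) :
    @MeasureTheory.AnalyticSet _ (vietoris HilbertCube)
      ({K : {A : Set HilbertCube // IsClosed A} |
          IsCompact (K : Set HilbertCube) ∧
          CountableDimensional (K : Set HilbertCube)}ᶜ) := by
  let := vietoris HilbertCube
  have := polishSpace_of_compactSpace (Compacts HilbertCube)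
  obtain ⟨𝓑, h𝓑, hpre⟩ :=
    hsouslin.exists_preimage_eq (effrosSigma_le_comap_ambientClosure E)
  rw [Compacts.compl_setOf_isCompact_and_countableDimensional,
    setOf_not_countableDimensional_eq_exists_le hcompl hzero hpre]
  refine AnalyticSet.image_of_continuous ?_ Compacts.continuous_toClosedSubtype
  exact AnalyticSet.setOf_exists_mem Compacts.isClosed_setOf_le
    (h𝓑.analyticSet.inter (analyticSet_setOf_ambientClosure_traceOn_eq E hBorel))
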